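/- arXiv:2008.13142 — 3 statements merged into one kernel-verified Lean document; each statement's English description precedes it below -/
import Mathlib

section
/- (Gödel's First Incompleteness Theorem, first half) Let T be a recursively axiomatized extension of PA and let G be a Gödel sentence for T, i.e. T ⊢ G ↔ ¬Prov_T(⌜G⌝). If T is consistent, then T does not prove G. -/
open FirstOrder Language BoundedFormula

/-- The function symbols of the language of arithmetic: `0, S, +, ×`. -/
inductive ArithFunc : ℕ → Type
  | zero : ArithFunc 0
  | succ : ArithFunc 1
  | add : ArithFunc 2
  | mul : ArithFunc 2

/-- The first-order language of arithmetic `{0, S, +, ×}`. -/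
def Larith : Language := ⟨ArithFunc, fun _ => Empty⟩

abbrev zero' {α : Type} : Larith.Term α := Term.func ArithFunc.zero ![]
abbrev succ' {α : Type} (t : Larith.Term α) : Larith.Term α := Term.func ArithFunc.succ ![t]
abbrev add' {α : Type} (t s : Larith.Term α) : Larith.Term α := Term.func ArithFunc.add ![t, s]
abbrev mul' {α : Type} (t s : Larith.Term α) : Larith.Term α := Term.func ArithFunc.mul ![t, s]

/-- The numeral `S^n(0)`. -/
def numeral {α : Type} : ℕ → Larith.Term α
  | 0 => zero'
  | n + 1 => succ' (numeral n)

/-- Substitution of a numeral for the unique free variable of a formula. -/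
def substNum (φ : Larith.Formula (Fin 1)) (n : ℕ) : Larith.Sentence :=
  φ.subst fun _ => numeral n

/-- Substitution of numerals for the two free variables of a formula. -/
def substNum2 (φ : Larith.Formula (Fin 2)) (m n : ℕ) : Larith.Sentence :=
  φ.subst ![numeral m, numeral n]

/-- Existential quantification of a formula with one free variable, as a sentence. -/
def toBF1 (φ : Larith.Formula (Fin 1)) : Larith.BoundedFormula Empty 1 :=
  BoundedFormula.relabel (fun _ => Sum.inr (0 : Fin 1)) φ

def exQ (φ : Larith.Formula (Fin 1)) : Larith.Sentence :=
  BoundedFormula.ex (toBF1 φ)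

/-- Universal quantification of a formula with one free variable, as a sentence. -/
def allQ (φ : Larith.Formula (Fin 1)) : Larith.Sentence :=
  BoundedFormula.all (toBF1 φ)

/-- `T` proves the sentence `φ` (via the completeness theorem, provability is
semantic consequence). -/
def Proves (T : Larith.Theory) (φ : Larith.Sentence) : Prop :=
  T ⊨ᵇ φ

/-- `T` is consistent: it does not prove a contradiction. -/
def Consistent (T : Larith.Theory) : Prop :=
  ¬ Proves T BoundedFormula.falsum

/-- `T` is ω-consistent: there is no formula `φ(x)` such that `T ⊢ ∃x φ(x)` and
`T ⊢ ¬φ(n̄)` for every natural number `n`. -/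
def OmegaConsistent (T : Larith.Theory) : Prop :=
  ¬ ∃ φ : Larith.Formula (Fin 1),
      Proves T (exQ φ) ∧ ∀ n : ℕ, Proves T (substNum φ n).not

-- extension chunk to test
instance : ∀ n, DecidableEq (ArithFunc n) := fun _ a b => by
  cases a <;> cases b <;> first | exact isTrue rfl | exact isFalse (by intro h; cases h)

instance : Countable (Σ l, Larith.Functions l) := by
  have : Function.Injective (fun f : Σ l, Larith.Functions l =>
    match f with
    | ⟨_, ArithFunc.zero⟩ => (0 : ℕ)
    | ⟨_, ArithFunc.succ⟩ => 1
    | ⟨_, ArithFunc.add⟩ => 2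
    | ⟨_, ArithFunc.mul⟩ => 3) := by
    rintro ⟨i, f⟩ ⟨j, g⟩ h
    cases f <;> cases g <;> simp_all
  exact this.countable

instance : ∀ n, IsEmpty (Larith.Relations n) := fun _ => ⟨fun r => r.elim⟩

instance : Countable (Σ l, Larith.Relations l) :=
  ⟨⟨fun x => x.2.elim, fun x => x.2.elim⟩⟩

instance : Countable Larith.Sentence := by
  have : Function.Injective (fun φ : Larith.Sentence =>
      (⟨0, φ⟩ : Σ n, Larith.BoundedFormula Empty n)) := by
    intro φ ψ h
    simpa using h
  have h2 := (BoundedFormula.listEncode_sigma_injective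
    (L := Larith) (α := Empty)).comp this
  exact h2.countable

noncomputable instance : Encodable Larith.Sentence := Encodable.ofCountable _

/-- A fixed Gödel numbering of sentences. -/
noncomputable def gnum (φ : Larith.Sentence) : ℕ := Encodable.encode φ

/-- The sentence `0 ≠ 0`. -/
def falseEq : Larith.Sentence := ∼(zero' =' zero')

def q1 : Larith.Sentence := ∀' ∀' ((succ' &0 =' succ' &1) ⟹ (&0 =' &1))
def q2 : Larith.Sentence := ∀' ∼(succ' &0 =' zero')
def q3 : Larith.Sentence := ∀' (∼(&0 =' zero') ⟹ ∃' (&0 =' succ' &1))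
def q4 : Larith.Sentence := ∀' (add' &0 zero' =' &0)
def q5 : Larith.Sentence := ∀' ∀' (add' &0 (succ' &1) =' succ' (add' &0 &1))
def q6 : Larith.Sentence := ∀' (mul' &0 zero' =' zero')
def q7 : Larith.Sentence := ∀' ∀' (mul' &0 (succ' &1) =' add' (mul' &0 &1) &0)

/-- Robinson arithmetic `Q`. -/
def RobinsonQ : Larith.Theory := {q1, q2, q3, q4, q5, q6, q7}

/-- The induction axiom for a formula `φ` with free variable `&m` (the last
de Bruijn variable) and parameters `&0, …, &(m-1)`, universally closed. -/
def indAxiom (m : ℕ) (φ : Larith.BoundedFormula Empty (m + 1)) : Larith.Sentence :=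
  BoundedFormula.alls
    ((∀' ((&(Fin.last m) =' zero') ⟹ φ)) ⟹
      ((∀' (φ ⟹ ∀' ((&(Fin.last (m + 1)) =' succ' &((Fin.last m).castSucc)) ⟹
          φ.liftAt 1 m))) ⟹
        ∀' φ))

/-- Peano arithmetic `PA`: the axioms of `Q` (except `Q₃`) together with the
induction scheme. -/
def PA : Larith.Theory :=
  {q1, q2, q4, q5, q6, q7} ∪ ⋃ m : ℕ, Set.range (indAxiom m)

/-- `T` has a recursive set of axioms. -/
def RecursivelyAxiomatized (T : Larith.Theory) : Prop :=
  ComputablePred fun n : ℕ => ∃ φ ∈ T, gnum φ = n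

/-- The set of Gödel numbers of theorems of `T` is recursive. -/
def DecidableTheory (T : Larith.Theory) : Prop :=
  ComputablePred fun n : ℕ => ∃ φ : Larith.Sentence, gnum φ = n ∧ Proves T φ

/-- The standard model of arithmetic. -/
instance : Larith.Structure ℕ where
  funMap {n} f args :=
    match f with
    | ArithFunc.zero => 0
    | ArithFunc.succ => args 0 + 1
    | ArithFunc.add => args 0 + args 1
    | ArithFunc.mul => args 0 * args 1
  RelMap {n} r _ := r.elim

/-- Truth in the standard model of arithmetic. -/
def TrueInN (φ : Larith.Sentence) : Prop := Sentence.Realize ℕ φ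


/-- G1, first half: for a recursively axiomatized extension `T`
of `PA` with standard provability predicate `Prov_T` (satisfying D1–D3) and a
Gödel sentence `G` (i.e. `T ⊢ G ↔ ¬Prov_T(⌜G⌝)`), if `T` is consistent then
`T ⊬ G`. -/
theorem goedel_first_incompleteness_first_half (T : Larith.Theory)
    (hPA : PA ⊆ T) (hRec : RecursivelyAxiomatized T)
    (PrT : Larith.Formula (Fin 1))
    (hD1 : ∀ φ : Larith.Sentence, Proves T φ → Proves T (substNum PrT (gnum φ)))
    (hD2 : ∀ φ ψ : Larith.Sentence,
      Proves T ((substNum PrT (gnum φ)) ⟹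
        ((substNum PrT (gnum (φ ⟹ ψ))) ⟹ substNum PrT (gnum ψ))))
    (hD3 : ∀ φ : Larith.Sentence,
      Proves T ((substNum PrT (gnum φ)) ⟹
        substNum PrT (gnum (substNum PrT (gnum φ)))))
    (G : Larith.Sentence)
    (hG : Proves T (G ⇔ ∼(substNum PrT (gnum G))))
    (hCons : Consistent T) :
    ¬ Proves T G := by
  intro hPG
  apply hCons
  have hPr := hD1 G hPG
  intro M v xs
  have h1 := hPG M v xs
  have h2 := hPr M v xs
  have h3 := hG M v xs
  simp only [BoundedFormula.realize_iff, BoundedFormula.realize_not] at h3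
  exact (h3.mp h1) h2
end

section
/- (Gödel's First Incompleteness Theorem, second half) Let T be a recursively axiomatized extension of PA and G a Gödel sentence for T. If T is ω-consistent, then T does not prove ¬G. -/
open FirstOrder Language BoundedFormula

/-- `∃y ψ(x,y)` as a formula of the single free variable `x`. -/
def exSnd (ψ : Larith.Formula (Fin 2)) : Larith.Formula (Fin 1) :=
  BoundedFormula.ex
    (BoundedFormula.relabel (![Sum.inl 0, Sum.inr 0] : Fin 2 → Fin 1 ⊕ Fin 1) ψ :
      Larith.BoundedFormula (Fin 1) 1)

section AuxLemmas

variable {M : Type*} [Larith.Structure M]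

/-- The interpretation of the numeral `n` in a structure `M`. -/
def numval (M : Type*) [Larith.Structure M] : ℕ → M
  | 0 => Structure.funMap (L := Larith) ArithFunc.zero ![]
  | n + 1 => Structure.funMap (L := Larith) ArithFunc.succ ![numval M n]

lemma realize_numeral {α : Type} (v : α → M) (n : ℕ) :
    Term.realize v (numeral n) = numval M n := by
  induction n with
  | zero =>
      simp only [numeral, numval, Term.realize]
      congr 1
      exact funext fun i => i.elim0
  | succ n ih =>
      simp only [numeral, numval, Term.realize]
      congr 1
      funext i
      fin_cases i
      simpa using ih

lemma realize_substNum (φ : Larith.Formula (Fin 1)) (n : ℕ) :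
    Sentence.Realize M (substNum φ n) ↔ φ.Realize (fun _ : Fin 1 => numval M n) := by
  have hv : (fun a : Fin 1 => Term.realize (default : Empty → M) (numeral n)) =
      (fun _ : Fin 1 => numval M n) := funext fun a => realize_numeral _ _
  simp only [substNum, Sentence.Realize, Formula.Realize, BoundedFormula.realize_subst]
  rw [hv]

lemma realize_substNum2 (φ : Larith.Formula (Fin 2)) (m n : ℕ) :
    Sentence.Realize M (substNum2 φ m n) ↔ φ.Realize ![numval M m, numval M n] := by
  have hv : (fun a : Fin 2 =>
      Term.realize (default : Empty → M) ((![numeral m, numeral n] : Fin 2 → _) a)) =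
      ![numval M m, numval M n] := by
    funext a
    fin_cases a <;> simp [realize_numeral]
  simp only [substNum2, Sentence.Realize, Formula.Realize, BoundedFormula.realize_subst]
  rw [hv]

lemma realize_exQ (φ : Larith.Formula (Fin 1)) :
    Sentence.Realize M (exQ φ) ↔ ∃ y : M, φ.Realize (fun _ : Fin 1 => y) := by
  rw [Sentence.Realize, exQ, Formula.Realize, BoundedFormula.realize_ex]
  refine exists_congr fun y => ?_
  rw [toBF1, BoundedFormula.realize_relabel]
  rw [Formula.Realize]
  constructor <;> intro h <;>
    · convert h using 2 <;>
        first
          | (funext a; simp [Fin.snoc])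
          | exact funext fun a => a.elim0
          | rfl

lemma realize_exSnd (Prf : Larith.Formula (Fin 2)) (v : Fin 1 → M) :
    (exSnd Prf).Realize v ↔ ∃ y : M, Prf.Realize ![v 0, y] := by
  rw [Formula.Realize, exSnd, BoundedFormula.realize_ex]
  refine exists_congr fun y => ?_
  rw [BoundedFormula.realize_relabel]
  rw [Formula.Realize]
  constructor <;> intro h <;>
    · convert h using 2 <;>
        first
          | (funext a; fin_cases a <;> simp [Fin.snoc])
          | exact funext fun a => a.elim0
          | rfl

lemma realize_psi (Prf : Larith.Formula (Fin 2)) (k : ℕ) (v : Fin 1 → M) :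
    Formula.Realize (Prf.subst ![numeral k, Term.var 0] : Larith.Formula (Fin 1)) v ↔
      Prf.Realize ![numval M k, v 0] := by
  have hv : (fun a : Fin 2 =>
      Term.realize v ((![numeral k, Term.var 0] : Fin 2 → Larith.Term (Fin 1)) a)) =
      ![numval M k, v 0] := by
    funext a
    fin_cases a <;> simp [realize_numeral, Term.realize]
  simp only [Formula.Realize, BoundedFormula.realize_subst]
  rw [hv]

end AuxLemmas

/-- G1, second half: for a recursively axiomatized extension `T`
of `PA`, a Gödel sentence `G` for `T` (with `Prov_T(x) = ∃y Prf(x,y)` for a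
proof predicate `Prf` representing the recursive proof relation of `T`), if
`T` is ω-consistent then `T ⊬ ¬G`. -/
theorem goedel_first_incompleteness_second_half (T : Larith.Theory)
    (hPA : PA ⊆ T) (hRec : RecursivelyAxiomatized T)
    (Prf : Larith.Formula (Fin 2))
    (PrT : Larith.Formula (Fin 1)) (hPrT : PrT = exSnd Prf)
    (hRep : ∀ φ : Larith.Sentence,
      Proves T φ ↔ ∃ n : ℕ, TrueInN (substNum2 Prf (gnum φ) n))
    (hRepNum : ∀ k n : ℕ,
      (TrueInN (substNum2 Prf k n) → Proves T (substNum2 Prf k n)) ∧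
      (¬ TrueInN (substNum2 Prf k n) → Proves T ∼(substNum2 Prf k n)))
    (G : Larith.Sentence)
    (hG : Proves T (G ⇔ ∼(substNum PrT (gnum G))))
    (hOmega : OmegaConsistent T) :
    ¬ Proves T ∼G := by
  intro hnG
  set k := gnum G with hk
  set ψ : Larith.Formula (Fin 1) := Prf.subst ![numeral k, Term.var 0] with hψ
  -- T does not prove G (else T would be inconsistent, contradicting ω-consistency)
  have hcons : ¬ Proves T (BoundedFormula.falsum : Larith.Sentence) := by
    intro hbot
    apply hOmega
    exact ⟨ψ, fun M v xs => (hbot M v xs).elim, fun n M v xs => (hbot M v xs).elim⟩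
  have hTG : ¬ Proves T G := by
    intro hTg
    apply hcons
    intro M v xs
    have h1 : Sentence.Realize M G := hTg M default default
    have h2 : Sentence.Realize M (∼G) := hnG M default default
    rw [Sentence.realize_not] at h2
    exact h2 h1
  have hnotTrue : ∀ n : ℕ, ¬ TrueInN (substNum2 Prf k n) := fun n hn =>
    hTG ((hRep G).mpr ⟨n, hn⟩)
  have hProvNeg : ∀ n : ℕ, Proves T (∼(substNum2 Prf k n)) := fun n =>
    (hRepNum k n).2 (hnotTrue n)
  apply hOmega
  refine ⟨ψ, ?_, fun n => ?_⟩
  · -- `T ⊢ ∃x ψ(x)`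
    intro M v xs
    have h1 : Sentence.Realize M (G ⇔ ∼(substNum PrT k)) := hG M default default
    have h2 : Sentence.Realize M (∼G) := hnG M default default
    rw [Sentence.realize_not] at h2
    rw [Sentence.Realize, Formula.realize_iff] at h1
    have h3 : Sentence.Realize M (substNum PrT k) := by
      by_contra hc
      exact h2 (h1.mpr ((Sentence.realize_not _).mpr hc))
    rw [hPrT, realize_substNum, realize_exSnd] at h3
    have h4 : Sentence.Realize M (exQ ψ) := by
      rw [realize_exQ]
      obtain ⟨y, hy⟩ := h3
      exact ⟨y, (realize_psi Prf k _).mpr hy⟩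
    have hv : v = default := Subsingleton.elim _ _
    have hxs : xs = default := Subsingleton.elim _ _
    rw [hv, hxs]
    exact h4
  · -- `T ⊢ ¬ψ(n̄)` for every `n`
    intro M v xs
    have hv : v = default := Subsingleton.elim _ _
    have hxs : xs = default := Subsingleton.elim _ _
    rw [hv, hxs]
    have h5 : ¬ Sentence.Realize M (substNum2 Prf k n) :=
      (Sentence.realize_not _).mp (hProvNeg n M default default)
    rw [realize_substNum2] at h5
    show Sentence.Realize M (∼(substNum ψ n))
    rw [Sentence.realize_not, realize_substNum]
    intro hcon
    exact h5 ((realize_psi Prf k _).mp hcon)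
end

section
/- (Löb's Theorem) Let T be a recursively axiomatized consistent extension of PA with a standard provability predicate Pr_T satisfying D1–D3. For any sentence φ, if T ⊢ Pr_T(⌜φ⌝) → φ, then T ⊢ φ. -/
open FirstOrder Language BoundedFormula

section LoebAux
open FirstOrder Language

variable {T : Larith.Theory}

abbrev Mdl (T : Larith.Theory) := Theory.ModelType.{0,0,0} T

lemma proves_iff {A : Larith.Sentence} :
    Proves T A ↔ ∀ M : Mdl T, A.Realize M :=
  Theory.models_sentence_iff

lemma sreal_imp {M : Type*} [Larith.Structure M] {A B : Larith.Sentence} :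
    (M ⊨ A ⟹ B) ↔ (M ⊨ A → M ⊨ B) :=
  BoundedFormula.realize_imp

lemma sreal_iff {M : Type*} [Larith.Structure M] {A B : Larith.Sentence} :
    (M ⊨ A ⇔ B) ↔ (M ⊨ A ↔ M ⊨ B) :=
  BoundedFormula.realize_iff

lemma proves_mp {A B : Larith.Sentence} (h1 : Proves T (A ⟹ B)) (h2 : Proves T A) :
    Proves T B := by
  rw [proves_iff] at *
  exact fun M => sreal_imp.1 (h1 M) (h2 M)

lemma proves_impI {A B : Larith.Sentence}
    (h : ∀ M : Mdl T, A.Realize M → B.Realize M) : Proves T (A ⟹ B) := by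
  rw [proves_iff]
  exact fun M => sreal_imp.2 (h M)

lemma realize_relabel_empty {M : Type*} [Larith.Structure M] (φ : Larith.Sentence)
    (v : Fin 1 → M) :
    (Formula.relabel (fun e : Empty => e.elim) φ).Realize v ↔ M ⊨ φ := by
  rw [Formula.realize_relabel]
  exact iff_of_eq (congrArg (Formula.Realize φ) (Subsingleton.elim _ _))

lemma realize_substNum_imp (PrT : Larith.Formula (Fin 1)) (φ : Larith.Sentence)
    (n : ℕ) {M : Type*} [Larith.Structure M] :
    (M ⊨ substNum (PrT.imp (φ.relabel (fun e : Empty => e.elim))) n) ↔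
      ((M ⊨ substNum PrT n) → M ⊨ φ) := by
  simp only [substNum, Sentence.Realize, Formula.Realize, BoundedFormula.realize_subst,
    BoundedFormula.realize_imp]
  constructor
  · intro h hp
    exact (realize_relabel_empty φ _).mp (h hp)
  · intro h hp
    exact (realize_relabel_empty φ _).mpr (h hp)

end LoebAux

/-- Löb's theorem: for a recursively axiomatized consistent
extension `T` of `PA` with standard provability predicate `Pr_T` (satisfying
D1–D3, the diagonalization lemma being available), for any sentence `φ`:
if `T ⊢ Pr_T(⌜φ⌝) → φ` then `T ⊢ φ`. -/
theorem loeb_theorem (T : Larith.Theory)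
    (hPA : PA ⊆ T) (hRec : RecursivelyAxiomatized T) (hCons : Consistent T)
    (PrT : Larith.Formula (Fin 1))
    (hD1 : ∀ φ : Larith.Sentence, Proves T φ → Proves T (substNum PrT (gnum φ)))
    (hD2 : ∀ φ ψ : Larith.Sentence,
      Proves T ((substNum PrT (gnum φ)) ⟹
        ((substNum PrT (gnum (φ ⟹ ψ))) ⟹ substNum PrT (gnum ψ))))
    (hD3 : ∀ φ : Larith.Sentence,
      Proves T ((substNum PrT (gnum φ)) ⟹
        substNum PrT (gnum (substNum PrT (gnum φ)))))
    (hdiag : ∀ ψ : Larith.Formula (Fin 1),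
      ∃ θ : Larith.Sentence, Proves T (θ ⇔ substNum ψ (gnum θ)))
    (φ : Larith.Sentence)
    (hφ : Proves T ((substNum PrT (gnum φ)) ⟹ φ)) :
    Proves T φ := by
  -- Diagonalize on ψ(x) := PrT(x) → φ
  obtain ⟨θ, hθ⟩ := hdiag (PrT.imp (φ.relabel (fun e : Empty => e.elim)))
  set S := substNum (PrT.imp (φ.relabel (fun e : Empty => e.elim))) (gnum θ) with hS
  set P := substNum PrT (gnum θ) with hP
  -- Step a: T ⊢ θ ⟹ (P ⟹ φ)
  have ha : Proves T (θ ⟹ (P ⟹ φ)) := by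
    apply proves_impI
    intro M hth
    rw [proves_iff] at hθ
    have hSreal : S.Realize M := (sreal_iff.1 (hθ M)).1 hth
    exact sreal_imp.2 ((realize_substNum_imp PrT φ (gnum θ) (M := M)).1 hSreal)
  -- Steps b,c: T ⊢ P ⟹ Pr(⌜P ⟹ φ⌝)
  have hb := hD1 _ ha
  have hc : Proves T (P ⟹ substNum PrT (gnum (P ⟹ φ))) := by
    apply proves_impI
    intro M hPreal
    have h2 := hD2 θ (P ⟹ φ)
    rw [proves_iff] at h2 hb
    exact sreal_imp.1 (sreal_imp.1 (h2 M) hPreal) (hb M)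
  -- Step f: T ⊢ P ⟹ Pr(⌜φ⌝)
  have hf : Proves T (P ⟹ substNum PrT (gnum φ)) := by
    apply proves_impI
    intro M hPreal
    have h3 := hD3 θ
    have h2' := hD2 P φ
    rw [proves_iff] at h3 hc h2'
    exact sreal_imp.1 (sreal_imp.1 (h2' M) (sreal_imp.1 (h3 M) hPreal))
      (sreal_imp.1 (hc M) hPreal)
  -- Step g: T ⊢ P ⟹ φ
  have hg : Proves T (P ⟹ φ) := by
    apply proves_impI
    intro M hPreal
    rw [proves_iff] at hf hφ
    exact sreal_imp.1 (hφ M) (sreal_imp.1 (hf M) hPreal)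
  -- Step h: T ⊢ θ
  have hth : Proves T θ := by
    rw [proves_iff]
    intro M
    rw [proves_iff] at hθ hg
    exact (sreal_iff.1 (hθ M)).2
      ((realize_substNum_imp PrT φ (gnum θ) (M := M)).2 (sreal_imp.1 (hg M)))
  -- Conclude: T ⊢ Pr(⌜θ⌝) = P, so T ⊢ φ
  exact proves_mp hg (hD1 θ hth)
end
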